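/- arXiv:1305.2472 — 2 statements merged into one kernel-verified Lean document; each statement's English description precedes it below -/
import Mathlib

section
/- There exist constants c > 0 and γ > 0 such that for all integers 1 ≤ l < m and all subsets S, S' ⊆ 𝕄, | ⟨Ψ, M^{l−1} M_S M^{m−l−1} M_{S'} Ψ⟩ − ⟨Ψ, M^{l−1} M_S Ψ⟩ · ⟨Ψ, M^{m−1} M_{S'} Ψ⟩ | ≤ c e^{−γ(m−l)}. (In the repeated measurement interpretation this says |P(X_l ∈ S, X_m ∈ S') − P(X_l ∈ S)·P(X_m ∈ S')| ≤ c e^{−γ(m−l)}: the outcomes of measurements performed at times l and m become exponentially decorrelated as m − l grows.) -/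
/-!
Because the eigenvalue `1` of `M` is simple, the eigenspace `ℂ Ψ` is complementary to the
range of `M - 1`, and the projection `P` onto it along that range satisfies
`M P = P M = P² = P`. A nonzero eigenvalue of `M - P` is an eigenvalue of `M` other than `1`,
so `M - P` has spectral radius `< 1`, and by Gelfand's formula
`M ^ n - P = (M - P) ^ n (1 - P)` decays geometrically. As `P` maps into `ℂ Ψ`, the vector
state `ω(X) = ⟨Ψ, X Ψ⟩` factorises as `ω(X P Y) = ω(X) ω(P Y)`; so replacing `M ^ (m - l - 1)`
and `M ^ (m - 1)` by `P` makes the correlation vanish, and what is left is controlled by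
`‖M ^ k - P‖` for `k ≥ m - l - 1`.
-/

open scoped Matrix
open Complex

open scoped ENNReal
open Filter Asymptotics Module
-- Any algebra norm on matrices would do; we use the `L^∞` operator norm.
open scoped Matrix.Norms.Operator

noncomputable section

theorem pow_sub_eq_sub_pow_mul {R : Type*} [Ring R] {x p : R} (hxp : x * p = p)
    (hpx : p * x = p) (hp : p * p = p) (n : ℕ) : x ^ n - p = (x - p) ^ n * (1 - p) := by
  have hpxn : ∀ n : ℕ, p * x ^ n = p := fun n => by
    induction n with
    | zero => rw [pow_zero, mul_one]
    | succ n ih => rw [pow_succ, ← mul_assoc, ih, hpx]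
  induction n with
  | zero => rw [pow_zero, pow_zero, one_mul]
  | succ n ih =>
    calc x ^ (n + 1) - p = (x - p) * (x ^ n - p) := by
          rw [pow_succ', sub_mul, mul_sub, mul_sub, hxp, hpxn, hp]; abel
      _ = (x - p) ^ (n + 1) * (1 - p) := by rw [ih, ← mul_assoc, ← pow_succ']

theorem exists_pos_forall_norm_sum_le {ι E : Type*} [Fintype ι] [SeminormedAddCommGroup E]
    (f : ι → E) : ∃ N > 0, ∀ S : Finset ι, ‖∑ i ∈ S, f i‖ ≤ N :=
  ⟨∑ i, ‖f i‖ + 1, by positivity, fun S => (norm_sum_le _ _).trans <|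
    (Finset.sum_le_sum_of_subset_of_nonneg S.subset_univ fun _ _ _ => norm_nonneg _).trans
      (le_add_of_nonneg_right zero_le_one)⟩

section BanachAlgebra

variable {A : Type*} [NormedRing A] [NormedAlgebra ℂ A] [CompleteSpace A]

theorem exists_norm_pow_le_mul_pow_of_spectralRadius_lt_one {a : A}
    (h : spectralRadius ℂ a < 1) :
    ∃ C > 0, ∃ r : ℝ, 0 < r ∧ r < 1 ∧ ∀ n : ℕ, ‖a ^ n‖ ≤ C * r ^ n := by
  -- the `max` with `2⁻¹` only serves to make `r` positive
  obtain ⟨r, -, hρr, hr1⟩ :=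
    ENNReal.lt_iff_exists_real_btwn.mp (max_lt h (by norm_num : (2⁻¹ : ℝ≥0∞) < 1))
  have hr0 : 0 < r := ENNReal.ofReal_pos.mp
    (((by norm_num : (0 : ℝ≥0∞) < 2⁻¹).trans_le (le_max_right _ _)).trans hρr)
  have hev : ∀ᶠ n : ℕ in atTop, ‖a ^ n‖ ≤ 1 * ‖r ^ n‖ := by
    filter_upwards [eventually_gt_atTop 0,
      (spectrum.pow_norm_pow_one_div_tendsto_nhds_spectralRadius a).eventually_lt_const
        ((le_max_left _ _).trans_lt hρr)] with n hn0 hn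
    rw [ENNReal.ofReal_lt_ofReal_iff hr0, one_div, Real.rpow_inv_lt_iff_of_pos (norm_nonneg _)
      hr0.le (by positivity), Real.rpow_natCast] at hn
    rw [one_mul, Real.norm_of_nonneg (by positivity)]
    exact hn.le
  obtain ⟨C, hC, hCr⟩ := bound_of_isBigO_nat_atTop (IsBigO.of_bound 1 hev)
  refine ⟨C, hC, r, hr0, ENNReal.ofReal_lt_one.mp hr1, fun n => ?_⟩
  simpa [abs_of_pos hr0] using hCr (pow_ne_zero n hr0.ne')

theorem exists_norm_pow_sub_le_mul_pow {x p : A} (hxp : x * p = p) (hpx : p * x = p)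
    (hp : p * p = p) (h : spectralRadius ℂ (x - p) < 1) :
    ∃ C > 0, ∃ r : ℝ, 0 < r ∧ r < 1 ∧ ∀ n : ℕ, ‖x ^ n - p‖ ≤ C * r ^ n := by
  obtain ⟨C, hC, r, hr0, hr1, hCr⟩ := exists_norm_pow_le_mul_pow_of_spectralRadius_lt_one h
  refine ⟨C * (1 + ‖1 - p‖), by positivity, r, hr0, hr1, fun n => ?_⟩
  calc ‖x ^ n - p‖ ≤ ‖(x - p) ^ n‖ * ‖1 - p‖ := by
        rw [pow_sub_eq_sub_pow_mul hxp hpx hp]; exact norm_mul_le _ _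
    _ ≤ C * r ^ n * (1 + ‖1 - p‖) := by gcongr; exacts [hCr n, le_add_of_nonneg_left zero_le_one]
    _ = C * (1 + ‖1 - p‖) * r ^ n := by ring

theorem exists_norm_correlation_le_mul_pow (φ : A →L[ℂ] ℂ) {x p : A} (hxp : x * p = p)
    (hpx : p * x = p) (hp : p * p = p) (hφ : ∀ u v, φ (u * p * v) = φ u * φ (p * v))
    (h : spectralRadius ℂ (x - p) < 1) :
    ∃ c > 0, ∃ r : ℝ, 0 < r ∧ r < 1 ∧ ∀ (i k j : ℕ) (s t : A), k ≤ j →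
      ‖φ (x ^ i * s * x ^ k * t) - φ (x ^ i * s) * φ (x ^ j * t)‖ ≤ c * ‖s‖ * ‖t‖ * r ^ k := by
  obtain ⟨C, hC, r, hr0, hr1, hCr⟩ := exists_norm_pow_sub_le_mul_pow hxp hpx hp h
  obtain ⟨K, hK, hφK⟩ := φ.bound
  have hpow (n : ℕ) : ‖x ^ n‖ ≤ C + ‖p‖ :=
    calc ‖x ^ n‖ ≤ ‖x ^ n - p‖ + ‖p‖ := norm_le_norm_sub_add _ _
      _ ≤ C * 1 + ‖p‖ := by
          gcongr; exact (hCr n).trans (by gcongr; exact pow_le_one₀ hr0.le hr1.le)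
      _ = C + ‖p‖ := by rw [mul_one]
  refine ⟨K * (C + ‖p‖) * C * (1 + K), by positivity, r, hr0, hr1, fun i k j s t hkj => ?_⟩
  set u := x ^ i * s
  have hu : ‖u‖ ≤ (C + ‖p‖) * ‖s‖ := (norm_mul_le _ _).trans (by gcongr; exact hpow i)
  have hsplit : φ (u * x ^ k * t) - φ u * φ (x ^ j * t) =
      φ (u * (x ^ k - p) * t) - φ u * φ ((x ^ j - p) * t) := by
    have h₁ : u * x ^ k * t = u * (x ^ k - p) * t + u * p * t := by noncomm_ring
    have h₂ : x ^ j * t = (x ^ j - p) * t + p * t := by noncomm_ring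
    rw [h₁, h₂, map_add, map_add, hφ]; ring
  calc ‖φ (u * x ^ k * t) - φ u * φ (x ^ j * t)‖
      ≤ ‖φ (u * (x ^ k - p) * t)‖ + ‖φ u‖ * ‖φ ((x ^ j - p) * t)‖ := by
        rw [hsplit, ← norm_mul]; exact norm_sub_le _ _
    _ ≤ K * (‖u‖ * ‖x ^ k - p‖ * ‖t‖) + K * ‖u‖ * (K * (‖x ^ j - p‖ * ‖t‖)) := by
        gcongr
        · exact (hφK _).trans (by gcongr; exact norm_mul₃_le)
        · exact hφK _
        · exact (hφK _).trans (by gcongr; exact norm_mul_le _ _)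
    _ ≤ K * ((C + ‖p‖) * ‖s‖ * (C * r ^ k) * ‖t‖)
        + K * ((C + ‖p‖) * ‖s‖) * (K * (C * r ^ k * ‖t‖)) := by
        gcongr
        · exact hCr k
        · exact (hCr j).trans
            (mul_le_mul_of_nonneg_left (pow_le_pow_of_le_one hr0.le hr1.le hkj) hC.le)
    _ = K * (C + ‖p‖) * C * (1 + K) * ‖s‖ * ‖t‖ * r ^ k := by ring

end BanachAlgebra

namespace Module.End

variable {K V : Type*} [Field K] [AddCommGroup V] [Module K V] [FiniteDimensional K V]
  (f : End K V) (μ : K)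

theorem disjoint_eigenspace_range_of_finrank_maxGenEigenspace_le_one
    (h : finrank K (f.maxGenEigenspace μ) ≤ 1) :
    Disjoint (f.eigenspace μ) (LinearMap.range (f - μ • 1)) := by
  rw [Submodule.disjoint_def]
  rintro _ hv ⟨w, rfl⟩
  by_contra hne
  have hv' : (f - μ • 1) ((f - μ • 1) w) = 0 := by
    rwa [eigenspace_def, LinearMap.mem_ker] at hv
  have hw : w ∈ f.maxGenEigenspace μ := (f.mem_maxGenEigenspace μ w).mpr ⟨2, by rwa [sq]⟩
  have hspan : K ∙ (f - μ • 1) w = f.maxGenEigenspace μ :=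
    Submodule.eq_of_le_of_finrank_le
      ((Submodule.span_singleton_le_iff_mem _ _).mpr (eigenspace_le_maxGenEigenspace hv))
      (h.trans (finrank_span_singleton hne).ge)
  obtain ⟨c, hc⟩ := Submodule.mem_span_singleton.mp (hspan ▸ hw)
  apply hne
  calc (f - μ • 1) w = (f - μ • 1) (c • (f - μ • 1) w) := by rw [hc]
    _ = 0 := by rw [map_smul, hv', smul_zero]

theorem isCompl_eigenspace_range_of_finrank_maxGenEigenspace_le_one
    (h : finrank K (f.maxGenEigenspace μ) ≤ 1) :
    IsCompl (f.eigenspace μ) (LinearMap.range (f - μ • 1)) :=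
  (Submodule.isCompl_iff_disjoint _ _ (by
    rw [eigenspace_def, add_comm, LinearMap.finrank_range_add_finrank_ker])).mpr
    (disjoint_eigenspace_range_of_finrank_maxGenEigenspace_le_one f μ h)

variable {f μ} in
theorem spectrum_sub_smul_subset {p : End K V} (hpf : p * f = μ • p) (hp : p * p = p)
    (hfix : ∀ v ∈ f.eigenspace μ, p v = v) :
    spectrum K (f - μ • p) ⊆ insert 0 (spectrum K f \ {μ}) := by
  intro z hz
  obtain ⟨v, hv, hv0⟩ := (hasEigenvalue_iff_mem_spectrum.mpr hz).exists_hasEigenvector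
  rw [mem_eigenspace_iff, LinearMap.sub_apply, LinearMap.smul_apply] at hv
  by_cases hz0 : z = 0
  · exact .inl hz0
  have hpv : p v = 0 := by
    have := congrArg p hv
    rw [map_sub, map_smul, ← mul_apply, ← mul_apply, hpf, hp, LinearMap.smul_apply, sub_self,
      map_smul] at this
    exact (smul_eq_zero.mp this.symm).resolve_left hz0
  rw [hpv, smul_zero, sub_zero] at hv
  refine .inr ⟨hasEigenvalue_iff_mem_spectrum.mp
    (hasEigenvalue_of_hasEigenvector ⟨mem_eigenspace_iff.mpr hv, hv0⟩), ?_⟩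
  rintro rfl
  exact hv0 (hpv ▸ (hfix v (mem_eigenspace_iff.mpr hv)).symm)

theorem exists_eigenprojection_of_finrank_maxGenEigenspace_le_one
    (h : finrank K (f.maxGenEigenspace μ) ≤ 1) :
    ∃ p : End K V, f * p = μ • p ∧ p * f = μ • p ∧ p * p = p ∧
      LinearMap.range p = f.eigenspace μ ∧
      spectrum K (f - μ • p) ⊆ insert 0 (spectrum K f \ {μ}) := by
  set hc := isCompl_eigenspace_range_of_finrank_maxGenEigenspace_le_one f μ h
  set p := (f.eigenspace μ).projection _ hc
  have hfp : f * p = μ • p := LinearMap.ext fun v =>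
    mem_eigenspace_iff.mp (Submodule.projection_apply_mem hc v)
  have hpf : p * f = μ • p := LinearMap.ext fun v => by
    have hg : p ((f - μ • 1) v) = 0 :=
      Submodule.projection_apply_of_mem_right hc (LinearMap.mem_range_self _ v)
    rwa [LinearMap.sub_apply, map_sub, sub_eq_zero, LinearMap.smul_apply, one_apply,
      map_smul] at hg
  have hp : p * p = p := Submodule.isIdempotentElem_projection hc
  exact ⟨p, hfp, hpf, hp, Submodule.range_projection hc,
    spectrum_sub_smul_subset hpf hp fun v hv => Submodule.projection_apply_of_mem_left hc hv⟩

end Module.End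

namespace Matrix

variable {n : Type*} [Fintype n]

theorem exists_eigenprojection_of_finrank_maxGenEigenspace_le_one {K : Type*} [Field K]
    [DecidableEq n] (M : Matrix n n K) (μ : K)
    (h : finrank K (End.maxGenEigenspace M.mulVecLin μ) ≤ 1) :
    ∃ P : Matrix n n K, M * P = μ • P ∧ P * M = μ • P ∧ P * P = P ∧
      (∀ v, P *ᵥ v ∈ End.eigenspace M.mulVecLin μ) ∧
      spectrum K (M - μ • P) ⊆ insert 0 (spectrum K M \ {μ}) := by
  obtain ⟨p, hfp, hpf, hp, hrange, hspec⟩ :=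
    End.exists_eigenprojection_of_finrank_maxGenEigenspace_le_one M.mulVecLin μ h
  let e : Matrix n n K ≃ₐ[K] End K (n → K) := toLinAlgEquiv'
  have he : e M = M.mulVecLin := rfl
  refine ⟨e.symm p, e.injective ?_, e.injective ?_, e.injective ?_, fun v => ?_, ?_⟩
  · simpa [he] using hfp
  · simpa [he] using hpf
  · simpa using hp
  · exact hrange ▸ ⟨v, (LinearMap.toMatrix'_mulVec p v).symm⟩
  · rw [← AlgEquiv.spectrum_eq e, ← AlgEquiv.spectrum_eq e M]
    simpa [he] using hspec

theorem exists_projection_spectralRadius_sub_lt_one [DecidableEq n] {M : Matrix n n ℂ}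
    {Ψ : n → ℂ} (hΨ : Ψ ≠ 0) (hinv : M *ᵥ Ψ = Ψ)
    (hgap : ∀ z ∈ spectrum ℂ M, z ≠ 1 → ‖z‖ < 1)
    (hsimple : finrank ℂ (End.maxGenEigenspace M.mulVecLin 1) = 1) :
    ∃ P : Matrix n n ℂ, M * P = P ∧ P * M = P ∧ P * P = P ∧ (∀ v, P *ᵥ v ∈ ℂ ∙ Ψ) ∧
      spectralRadius ℂ (M - P) < 1 := by
  have : Nonempty n := let ⟨i, _⟩ := Function.ne_iff.mp hΨ; ⟨i⟩
  obtain ⟨P, hMP, hPM, hP, hPrange, hspec⟩ :=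
    exists_eigenprojection_of_finrank_maxGenEigenspace_le_one M 1 hsimple.le
  rw [one_smul] at hMP hPM hspec
  have hΨgen : Ψ ∈ End.maxGenEigenspace M.mulVecLin 1 :=
    End.eigenspace_le_maxGenEigenspace (End.mem_eigenspace_iff.mpr (by rw [one_smul]; exact hinv))
  refine ⟨P, hMP, hPM, hP, fun v => ?_, spectrum.spectralRadius_lt_of_forall_lt _ fun z hz => ?_⟩
  · exact eq_span_singleton_of_mem_of_finrank_eq_one hsimple hΨgen hΨ ▸
      End.eigenspace_le_maxGenEigenspace (hPrange v)
  · rcases hspec hz with rfl | ⟨hzM, hz1⟩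
    · simp
    · exact_mod_cast hgap z hzM hz1

def vectorState (Ψ : n → ℂ) : Matrix n n ℂ →ₗ[ℂ] ℂ where
  toFun X := star Ψ ⬝ᵥ X *ᵥ Ψ
  map_add' X Y := by rw [add_mulVec, dotProduct_add]
  map_smul' c X := by rw [smul_mulVec, dotProduct_smul]; rfl

theorem vectorState_apply (Ψ : n → ℂ) (X : Matrix n n ℂ) :
    vectorState Ψ X = star Ψ ⬝ᵥ X *ᵥ Ψ :=
  rfl

theorem vectorState_mul_mul {Ψ : n → ℂ} (hΨ : star Ψ ⬝ᵥ Ψ = 1) {P : Matrix n n ℂ}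
    (hP : ∀ v, P *ᵥ v ∈ ℂ ∙ Ψ) (X Y : Matrix n n ℂ) :
    vectorState Ψ (X * P * Y) = vectorState Ψ X * vectorState Ψ (P * Y) := by
  obtain ⟨c, hc⟩ := Submodule.mem_span_singleton.mp (hP (Y *ᵥ Ψ))
  simp only [vectorState_apply, ← mulVec_mulVec, ← hc, mulVec_smul, dotProduct_smul, hΨ,
    smul_eq_mul, mul_one, mul_comm]

end Matrix

theorem repeated_measurement_decay_of_correlations_general
    (D : ℕ) (𝕄 : Type*) [Fintype 𝕄]
    (Mm : 𝕄 → Matrix (Fin D) (Fin D) ℂ)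
    (Ψ : Fin D → ℂ)
    (hunit : dotProduct (star Ψ) Ψ = 1)
    (hinv : (∑ m, Mm m).mulVec Ψ = Ψ)
    (hspec1 : ∀ z ∈ spectrum ℂ (∑ m, Mm m), ‖z‖ ≤ 1)
    (hspec2 : ∀ z ∈ spectrum ℂ (∑ m, Mm m), ‖z‖ = 1 → z = 1)
    (hsimple : Module.finrank ℂ
      (Module.End.maxGenEigenspace (Matrix.mulVecLin (∑ m, Mm m)) 1) = 1) :
    ∃ c > (0 : ℝ), ∃ γ > (0 : ℝ), ∀ l m : ℕ, 1 ≤ l → l < m → ∀ S S' : Finset 𝕄,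
      ‖dotProduct (star Ψ)
          (((∑ m', Mm m') ^ (l - 1) * (∑ i ∈ S, Mm i) * (∑ m', Mm m') ^ (m - l - 1) *
            (∑ i ∈ S', Mm i)).mulVec Ψ) -
        dotProduct (star Ψ)
            (((∑ m', Mm m') ^ (l - 1) * (∑ i ∈ S, Mm i)).mulVec Ψ) *
          dotProduct (star Ψ)
            (((∑ m', Mm m') ^ (m - 1) * (∑ i ∈ S', Mm i)).mulVec Ψ)‖ ≤
      c * Real.exp (-γ * (m - l)) := by
  have hΨ : Ψ ≠ 0 := by rintro rfl; simp at hunit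
  obtain ⟨P, hMP, hPM, hP, hPΨ, hgap⟩ := Matrix.exists_projection_spectralRadius_sub_lt_one hΨ
    hinv (fun z hz h1 => (hspec1 z hz).lt_of_ne (mt (hspec2 z hz) h1)) hsimple
  obtain ⟨c, hc, r, hr0, hr1, hcorr⟩ := exists_norm_correlation_le_mul_pow
    (Matrix.vectorState Ψ).toContinuousLinearMap hMP hPM hP
    (Matrix.vectorState_mul_mul hunit hPΨ) hgap
  obtain ⟨N, hN, hNS⟩ := exists_pos_forall_norm_sum_le Mm
  refine ⟨c * N ^ 2 / r, by positivity, -Real.log r, neg_pos.mpr (Real.log_neg hr0 hr1),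
    fun l m hl hlm S S' => ?_⟩
  calc _ ≤ c * ‖∑ i ∈ S, Mm i‖ * ‖∑ i ∈ S', Mm i‖ * r ^ (m - l - 1) :=
        hcorr (l - 1) (m - l - 1) (m - 1) _ _ (by omega)
    _ ≤ c * N * N * r ^ (m - l - 1) := by gcongr <;> exact hNS _
    _ = c * N ^ 2 / r * r ^ (m - l) := by
        rw [← pow_sub_one_mul (by omega : m - l ≠ 0) r]; field_simp
    _ = c * N ^ 2 / r * Real.exp (-(-Real.log r) * (m - l)) := by
        rw [neg_neg, ← Real.rpow_def_of_pos hr0, ← Nat.cast_sub hlm.le, Real.rpow_natCast]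

/-- Decay of correlations for repeated measurements: the joint measurement probabilities
factorize up to an exponentially small error in the time separation `m - l`. -/
theorem repeated_measurement_decay_of_correlations
    (D : ℕ) (hD : 0 < D) (𝕄 : Type*) [Fintype 𝕄] [DecidableEq 𝕄]
    (Mm : 𝕄 → Matrix (Fin D) (Fin D) ℂ)
    (Ψ : Fin D → ℂ)
    (hunit : dotProduct (star Ψ) Ψ = 1)
    (hinv : (∑ m, Mm m).mulVec Ψ = Ψ)
    (hspec1 : ∀ z ∈ spectrum ℂ (∑ m, Mm m), ‖z‖ ≤ 1)
    (hspec2 : ∀ z ∈ spectrum ℂ (∑ m, Mm m), ‖z‖ = 1 → z = 1)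
    (hsimple : Module.finrank ℂ
      (Module.End.maxGenEigenspace (Matrix.mulVecLin (∑ m, Mm m)) 1) = 1) :
    ∃ c > (0 : ℝ), ∃ γ > (0 : ℝ), ∀ l m : ℕ, 1 ≤ l → l < m → ∀ S S' : Finset 𝕄,
      ‖dotProduct (star Ψ)
          (((∑ m', Mm m') ^ (l - 1) * (∑ i ∈ S, Mm i) * (∑ m', Mm m') ^ (m - l - 1) *
            (∑ i ∈ S', Mm i)).mulVec Ψ) -
        dotProduct (star Ψ)
            (((∑ m', Mm m') ^ (l - 1) * (∑ i ∈ S, Mm i)).mulVec Ψ) *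
          dotProduct (star Ψ)
            (((∑ m', Mm m') ^ (m - 1) * (∑ i ∈ S', Mm i)).mulVec Ψ)‖ ≤
      c * Real.exp (-γ * (m - l)) :=
  repeated_measurement_decay_of_correlations_general D 𝕄 Mm Ψ hunit hinv hspec1 hspec2 hsimple

end
end

section
/- There is a unique vector Ψ* ∈ ℂ^D with M*Ψ* = Ψ* and ⟨Ψ*, Ψ⟩ = 1 (M* the conjugate-transpose adjoint), and for every m ∈ 𝕄, lim_{N→∞} (1/N) Σ_{j=1}^{N} ⟨Ψ, M^{j−1} M_m Ψ⟩ = ⟨Ψ*, M_m Ψ⟩. (In the repeated measurement interpretation, the expected asymptotic frequency of the outcome m, 𝔼[f_m] = lim (1/N) Σ_{j=1}^N P(X_j = m), exists and equals ⟨Ψ*, M_m Ψ⟩, which is deterministic and independent of the initial data.) -/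
open scoped Matrix
open Filter Topology

/-!
Write `T` for `x ↦ M x`. Every vector is a sum of generalized eigenvectors of `T`. On the
generalized eigenspace of an eigenvalue `μ ≠ 1` we have `T = μ + N` with `N` nilpotent, so
`Tⁿ x = ∑_{i<k} C(n,i) μ^(n-i) Nⁱ x → 0` because `|μ| < 1`. The generalized eigenspace of `1`
is the line through `Ψ`, on which `T` is the identity. Hence `Tⁿ x → F(x) Ψ` for a linear
functional `F` with `F ∘ T = F` and `F Ψ = 1`, and `Ψ*` is the vector representing `F`. The
terms of the Cesàro means converge to `⟨Ψ, F(M_m Ψ) Ψ⟩ = ⟨Ψ*, M_m Ψ⟩`, and every `M*`-invariant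
`φ` satisfies `⟨φ, x⟩ = lim ⟨φ, Tⁿ x⟩ = F(x) ⟨φ, Ψ⟩`, which gives uniqueness.
-/

theorem tendsto_choose_mul_pow_sub_nhds_zero {R : Type*} [NormedRing R] [HasSummableGeomSeries R]
    (i : ℕ) {r : R} (hr : ‖r‖ < 1) :
    Tendsto (fun n : ℕ => (n.choose i : R) * r ^ (n - i)) atTop (𝓝 0) := by
  rw [← tendsto_add_atTop_iff_nat i]
  simpa using (summable_choose_mul_geometric_of_norm_lt_one i hr).tendsto_atTop_zero

namespace Module.End

open Finset

section Algebra

variable {R M : Type*} [CommRing R] [AddCommGroup M] [Module R M]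

theorem pow_apply_eq_sum_of_pow_sub_smul_apply_eq_zero (T : End R M) (μ : R) {k : ℕ} {x : M}
    (hx : ((T - μ • 1) ^ k) x = 0) (n : ℕ) :
    (T ^ n) x = ∑ i ∈ range k, ((n.choose i : R) * μ ^ (n - i)) • ((T - μ • 1) ^ i) x := by
  set N := T - μ • 1
  have hN : ∀ i, k ≤ i → (N ^ i) x = 0 := fun i hi => by
    rw [← Nat.sub_add_cancel hi, pow_add, mul_apply, hx, map_zero]
  have hT : T = N + μ • 1 := by simp [N]
  let f i := ((n.choose i : R) * μ ^ (n - i)) • (N ^ i) x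
  have hf : ∀ i, n < i ∨ k ≤ i → f i = 0 := by
    rintro i (hi | hi) <;> simp [f, Nat.choose_eq_zero_of_lt, hi, hN]
  calc (T ^ n) x = ∑ i ∈ range (n + 1), f i := by
        rw [hT, ((Commute.one_right N).smul_right μ).add_pow, LinearMap.sum_apply]
        refine sum_congr rfl fun i _ => ?_
        simp [f, smul_pow, mul_smul, Nat.cast_smul_eq_nsmul, mul_comm]
    _ = ∑ i ∈ range (n + 1 + k), f i :=
        sum_subset (range_subset_range.2 (by omega)) fun i _ hi => hf i (by simp at hi; omega)
    _ = ∑ i ∈ range k, f i :=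
        (sum_subset (range_subset_range.2 (by omega)) fun i _ hi =>
          hf i (by simp at hi; omega)).symm

theorem hasEigenvalue_of_mem_maxGenEigenspace {T : End R M} {μ : R} {x : M}
    (hx : x ∈ T.maxGenEigenspace μ) (hx0 : x ≠ 0) : T.HasEigenvalue μ :=
  HasUnifEigenvalue.lt zero_lt_one ((Submodule.ne_bot_iff _).2 ⟨x, hx, hx0⟩)

end Algebra

theorem eigenspace_eq_maxGenEigenspace_of_finrank_eq_one {K V : Type*} [Field K]
    [AddCommGroup V] [Module K V] [FiniteDimensional K V] (T : End K V) (μ : K)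
    (h : finrank K (T.maxGenEigenspace μ) = 1) :
    T.eigenspace μ = T.maxGenEigenspace μ := by
  have hne : T.HasUnifEigenvalue μ ⊤ := fun hbot => by
    rw [← Submodule.finrank_eq_zero] at hbot
    exact one_ne_zero (h.symm.trans hbot)
  refine Submodule.eq_of_le_of_finrank_le ((T.genEigenspace μ).monotone le_top) ?_
  rw [h, Nat.one_le_iff_ne_zero, Ne, Submodule.finrank_eq_zero]
  exact HasUnifEigenvalue.lt zero_lt_one hne

section Convergence

variable {𝕜 V : Type*} [NormedField 𝕜] [NormedAddCommGroup V] [NormedSpace 𝕜 V]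

theorem tendsto_pow_apply_of_mem_maxGenEigenspace (T : End 𝕜 V) {μ : 𝕜} (hμ : ‖μ‖ < 1)
    {x : V} (hx : x ∈ T.maxGenEigenspace μ) :
    Tendsto (fun n => (T ^ n) x) atTop (𝓝 0) := by
  obtain ⟨k, hk⟩ := (T.mem_maxGenEigenspace μ x).1 hx
  simp_rw [T.pow_apply_eq_sum_of_pow_sub_smul_apply_eq_zero μ hk]
  simpa using tendsto_finsetSum (range k) fun i _ =>
    (tendsto_choose_mul_pow_sub_nhds_zero i hμ).smul_const (((T - μ • 1) ^ i) x)

theorem tendsto_pow_apply_of_apply_eq_self {T : End 𝕜 V} {x : V} (hx : T x = x) :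
    Tendsto (fun n => (T ^ n) x) atTop (𝓝 x) :=
  tendsto_const_nhds.congr fun n => by
    rw [coe_pow, (Function.IsFixedPt.iterate (f := T) hx n).eq]

section Limit

variable {T : End 𝕜 V} {x y : V} (h : Tendsto (fun n => (T ^ n) x) atTop (𝓝 y))
include h

theorem tendsto_pow_apply_apply_of_tendsto : Tendsto (fun n => (T ^ n) (T x)) atTop (𝓝 y) := by
  simpa [pow_succ] using (tendsto_add_atTop_iff_nat 1).2 h

theorem apply_eq_self_of_tendsto_pow_apply (hT : Continuous T) : T y = y :=
  tendsto_nhds_unique ((hT.tendsto y).comp h) <| by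
    simpa [pow_succ', Function.comp_def] using (tendsto_add_atTop_iff_nat 1).2 h

theorem map_eq_of_tendsto_pow_apply {W : Type*} [TopologicalSpace W] [T2Space W] {f : V → W}
    (hf : Continuous f) (hfT : ∀ v, f (T v) = f v) : f y = f x := by
  have hconst : ∀ n, f ((T ^ n) x) = f x := by
    intro n
    induction n with
    | zero => simp
    | succ n ih => rw [pow_succ', mul_apply, hfT, ih]
  exact tendsto_nhds_unique ((hf.tendsto y).comp h)
    (tendsto_const_nhds.congr fun n => (hconst n).symm)

end Limit

variable [IsAlgClosed 𝕜] [FiniteDimensional 𝕜 V]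

theorem exists_tendsto_pow_apply (T : End 𝕜 V) (hspec : ∀ μ ∈ spectrum 𝕜 T, μ ≠ 1 → ‖μ‖ < 1)
    (hfix : ∀ x ∈ T.maxGenEigenspace 1, T x = x) (x : V) :
    ∃ y, Tendsto (fun n => (T ^ n) x) atTop (𝓝 y) := by
  have hx : x ∈ ⨆ μ, T.maxGenEigenspace μ := by simp [T.iSup_maxGenEigenspace_eq_top]
  induction hx using Submodule.iSup_induction' with
  | mem μ x hx =>
    by_cases hμ : μ = 1
    · subst hμ
      exact ⟨x, tendsto_pow_apply_of_apply_eq_self (hfix x hx)⟩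
    by_cases hx0 : x = 0
    · exact ⟨0, by simp [hx0]⟩
    have hμ_spec := (hasEigenvalue_of_mem_maxGenEigenspace hx hx0).mem_spectrum
    exact ⟨0, tendsto_pow_apply_of_mem_maxGenEigenspace T (hspec μ hμ_spec hμ) hx⟩
  | zero => exact ⟨0, by simp⟩
  | add x y _ _ hx hy =>
    obtain ⟨a, ha⟩ := hx
    obtain ⟨b, hb⟩ := hy
    exact ⟨a + b, by simpa using ha.add hb⟩

theorem exists_forall_tendsto_pow_apply (T : End 𝕜 V)
    (hspec : ∀ μ ∈ spectrum 𝕜 T, μ ≠ 1 → ‖μ‖ < 1) (hfix : ∀ x ∈ T.maxGenEigenspace 1, T x = x) :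
    ∃ P : End 𝕜 V, ∀ x, Tendsto (fun n => (T ^ n) x) atTop (𝓝 (P x)) := by
  choose P hP using T.exists_tendsto_pow_apply hspec hfix
  exact ⟨linearMapOfTendsto P (fun n => T ^ n) (tendsto_pi_nhds.2 hP), hP⟩

end Convergence

variable {𝕜 V : Type*} [NontriviallyNormedField 𝕜] [CompleteSpace 𝕜] [IsAlgClosed 𝕜]
  [NormedAddCommGroup V] [NormedSpace 𝕜 V] [FiniteDimensional 𝕜 V]

theorem exists_tendsto_pow_apply_eq_smul (T : End 𝕜 V)
    (hspec : ∀ μ ∈ spectrum 𝕜 T, μ ≠ 1 → ‖μ‖ < 1) (hsimple : finrank 𝕜 (T.maxGenEigenspace 1) = 1)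
    {Ψ : V} (hΨ : T Ψ = Ψ) (hΨ0 : Ψ ≠ 0) :
    ∃ F : V →ₗ[𝕜] 𝕜, F Ψ = 1 ∧ (∀ x, F (T x) = F x) ∧
      ∀ x, Tendsto (fun n => (T ^ n) x) atTop (𝓝 (F x • Ψ)) := by
  have hE := T.eigenspace_eq_maxGenEigenspace_of_finrank_eq_one 1 hsimple
  have hspan : T.eigenspace 1 = Submodule.span 𝕜 {Ψ} := by
    refine (Submodule.eq_of_le_of_finrank_eq ?_ ?_).symm
    · exact (Submodule.span_singleton_le_iff_mem _ _).2 (mem_eigenspace_iff.2 (by simpa using hΨ))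
    · rw [finrank_span_singleton hΨ0, hE, hsimple]
  obtain ⟨P, hP⟩ := T.exists_forall_tendsto_pow_apply hspec fun x hx => by
    simpa using mem_eigenspace_iff.1 (hE ▸ hx : x ∈ T.eigenspace 1)
  have hPspan (x : V) : P x ∈ Submodule.span 𝕜 {Ψ} := hspan ▸ mem_eigenspace_iff.2 (by
    simpa using apply_eq_self_of_tendsto_pow_apply (hP x) T.continuous_of_finiteDimensional)
  let F := (LinearEquiv.coord 𝕜 V Ψ hΨ0).toLinearMap ∘ₗ P.codRestrict _ hPspan
  have hFP (x : V) : F x • Ψ = P x := LinearEquiv.coord_apply_smul 𝕜 V Ψ hΨ0 _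
  refine ⟨F, ?_, fun x => ?_, fun x => hFP x ▸ hP x⟩
  · rw [← smul_left_injective 𝕜 hΨ0 |>.eq_iff, hFP, one_smul]
    exact tendsto_nhds_unique (hP Ψ) (tendsto_pow_apply_of_apply_eq_self hΨ)
  · rw [← smul_left_injective 𝕜 hΨ0 |>.eq_iff, hFP, hFP]
    exact tendsto_nhds_unique (hP (T x)) (tendsto_pow_apply_apply_of_tendsto (hP x))

end Module.End

namespace Matrix

variable {n R : Type*} [Fintype n]

theorem mulVecLin_pow_apply [CommSemiring R] [DecidableEq n] (M : Matrix n n R) (j : ℕ)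
    (v : n → R) : (M.mulVecLin ^ j) v = (M ^ j) *ᵥ v := by
  rw [← toLin'_apply', ← toLin'_pow, toLin'_apply]

theorem star_conjTranspose_mulVec_dotProduct [CommSemiring R] [StarRing R] (A : Matrix n n R)
    (v x : n → R) : star (Aᴴ *ᵥ v) ⬝ᵥ x = star v ⬝ᵥ (A *ᵥ x) := by
  rw [star_mulVec, conjTranspose_conjTranspose, dotProduct_mulVec]

end Matrix

open Matrix in
theorem repeated_measurement_frequencies_general
    (D : ℕ) (𝕄 : Type*) [Fintype 𝕄]
    (Mm : 𝕄 → Matrix (Fin D) (Fin D) ℂ)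
    (Ψ : Fin D → ℂ)
    (hunit : dotProduct (star Ψ) Ψ = 1)
    (hinv : (∑ m, Mm m).mulVec Ψ = Ψ)
    (hspec1 : ∀ z ∈ spectrum ℂ (∑ m, Mm m), ‖z‖ ≤ 1)
    (hspec2 : ∀ z ∈ spectrum ℂ (∑ m, Mm m), ‖z‖ = 1 → z = 1)
    (hsimple : Module.finrank ℂ
      (Module.End.maxGenEigenspace (Matrix.mulVecLin (∑ m, Mm m)) 1) = 1) :
    ∃ Ψstar : Fin D → ℂ,
      ((∑ m, Mm m)ᴴ.mulVec Ψstar = Ψstar ∧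
        dotProduct (star Ψstar) Ψ = 1 ∧
        ∀ φ : Fin D → ℂ, (∑ m, Mm m)ᴴ.mulVec φ = φ →
          dotProduct (star φ) Ψ = 1 → φ = Ψstar) ∧
      ∀ m : 𝕄,
        Tendsto
          (fun N : ℕ => ((N : ℂ))⁻¹ *
            ∑ j ∈ Finset.range N,
              dotProduct (star Ψ) (((∑ m', Mm m') ^ j * Mm m).mulVec Ψ))
          atTop
          (𝓝 (dotProduct (star Ψstar) ((Mm m).mulVec Ψ))) := by
  set M := ∑ m, Mm m
  have hΨ0 : Ψ ≠ 0 := by rintro rfl; simp at hunit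
  have hspec : ∀ μ ∈ spectrum ℂ M.mulVecLin, μ ≠ 1 → ‖μ‖ < 1 := by
    rw [← toLin'_apply', spectrum_toLin']
    exact fun μ hμ h1 => (hspec1 μ hμ).lt_of_ne (mt (hspec2 μ hμ) h1)
  obtain ⟨F, hFΨ, hFM, hF⟩ :=
    Module.End.exists_tendsto_pow_apply_eq_smul M.mulVecLin hspec hsimple hinv hΨ0
  set Ψstar := star ((dotProductEquiv ℂ (Fin D)).symm F)
  have hΨstar (x : Fin D → ℂ) : star Ψstar ⬝ᵥ x = F x := by
    rw [star_star]
    exact LinearMap.congr_fun ((dotProductEquiv ℂ (Fin D)).apply_symm_apply F) x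
  have hcont (φ : Fin D → ℂ) : Continuous (star φ ⬝ᵥ ·) := continuous_const.dotProduct continuous_id
  refine ⟨Ψstar, ⟨?_, by rw [hΨstar, hFΨ], fun φ hφ hφΨ => ?_⟩, fun m => ?_⟩
  · refine star_injective (dotProduct_eq _ _ fun x => ?_)
    rw [star_conjTranspose_mulVec_dotProduct, hΨstar, hΨstar, ← hFM x, mulVecLin_apply]
  · refine star_injective (dotProduct_eq _ _ fun x => ?_)
    have hφF := Module.End.map_eq_of_tendsto_pow_apply (hF x) (hcont φ) fun v => by
      rw [mulVecLin_apply, ← star_conjTranspose_mulVec_dotProduct, hφ]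
    rw [← hφF, dotProduct_smul, hφΨ, smul_eq_mul, mul_one, hΨstar]
  · have hlim := (((hcont Ψ).tendsto _).comp (hF (Mm m *ᵥ Ψ))).cesaro_smul
    rw [hΨstar]
    convert hlim using 2 with N
    · simp [mulVecLin_pow_apply, mulVec_mulVec, Complex.real_smul]
    · simp [dotProduct_smul, hunit]

/-- Asymptotic measurement frequencies: there is a unique vector `Ψ*` invariant under `M⋆`
and normalized against `Ψ`, and the expected frequency of each measurement outcome `m`
exists and equals `⟨Ψ*, M_m Ψ⟩`. -/
theorem repeated_measurement_frequencies
    (D : ℕ) (hD : 0 < D) (𝕄 : Type*) [Fintype 𝕄] [DecidableEq 𝕄]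
    (Mm : 𝕄 → Matrix (Fin D) (Fin D) ℂ)
    (Ψ : Fin D → ℂ)
    (hunit : dotProduct (star Ψ) Ψ = 1)
    (hinv : (∑ m, Mm m).mulVec Ψ = Ψ)
    (hspec1 : ∀ z ∈ spectrum ℂ (∑ m, Mm m), ‖z‖ ≤ 1)
    (hspec2 : ∀ z ∈ spectrum ℂ (∑ m, Mm m), ‖z‖ = 1 → z = 1)
    (hsimple : Module.finrank ℂ
      (Module.End.maxGenEigenspace (Matrix.mulVecLin (∑ m, Mm m)) 1) = 1) :
    ∃ Ψstar : Fin D → ℂ,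
      ((∑ m, Mm m)ᴴ.mulVec Ψstar = Ψstar ∧
        dotProduct (star Ψstar) Ψ = 1 ∧
        ∀ φ : Fin D → ℂ, (∑ m, Mm m)ᴴ.mulVec φ = φ →
          dotProduct (star φ) Ψ = 1 → φ = Ψstar) ∧
      ∀ m : 𝕄,
        Tendsto
          (fun N : ℕ => ((N : ℂ))⁻¹ *
            ∑ j ∈ Finset.range N,
              dotProduct (star Ψ) (((∑ m', Mm m') ^ j * Mm m).mulVec Ψ))
          atTop
          (𝓝 (dotProduct (star Ψstar) ((Mm m).mulVec Ψ))) :=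
  repeated_measurement_frequencies_general D 𝕄 Mm Ψ hunit hinv hspec1 hspec2 hsimple
end
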